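/- arXiv:2509.06880 — 5 statements merged into one kernel-verified Lean document; each statement's English description precedes it below -/
import Mathlib

section
/- Let G be a finite simple undirected graph and let C ⊆ V(G) be a set of vertices such that the induced subgraph G[C] is connected and |N[C]| > vi(G). Then every vi-set of G contains at least one vertex of N[C]. -/
namespace ParamReport

open SimpleGraph

variable {V : Type*} {U : Type*}

/-- The number of vertices in a largest connected component of `H` (`0` if `H` has no
vertices). -/
noncomputable def cc {W : Type*} (H : SimpleGraph W) : ℕ :=
  sSup {n | ∃ c : H.ConnectedComponent, n = c.supp.ncard}

/-- `cc` of the graph `G − S`, the subgraph of `G` induced on `V(G) \ S`. -/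
noncomputable def ccDel (G : SimpleGraph V) (S : Set V) : ℕ :=
  cc (G.induce Sᶜ)

/-- The vertex integrity `vi(G) = min { |X| + cc(G − X) : X ⊆ V(G) }`. -/
noncomputable def vi (G : SimpleGraph V) : ℕ :=
  sInf {n | ∃ X : Set V, n = X.ncard + ccDel G X}

/-- `X` is a vi-set of `G` if `vi(G) = |X| + cc(G − X)`. -/
def IsViSet (G : SimpleGraph V) (X : Set V) : Prop :=
  vi G = X.ncard + ccDel G X

/-- `S` is a modulator for `coc_r(G)`: every connected component of `G − S` has at most
`r` vertices, i.e. `cc(G − S) ≤ r`. -/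
def IsModulator (G : SimpleGraph V) (r : ℕ) (S : Set V) : Prop :=
  ccDel G S ≤ r

/-- `S` is a minimum-size modulator for `coc_r(G)`. -/
def IsMinModulator (G : SimpleGraph V) (r : ℕ) (S : Set V) : Prop :=
  IsModulator G r S ∧ ∀ T : Set V, IsModulator G r T → S.ncard ≤ T.ncard

/-- The `r`-component order connectivity number: the size of a smallest modulator for
`coc_r(G)`. -/
noncomputable def coc (G : SimpleGraph V) (r : ℕ) : ℕ :=
  sInf {n | ∃ S : Set V, IsModulator G r S ∧ n = S.ncard}

/-- The open neighborhood `N(X) = (⋃ v ∈ X, N(v)) \ X` of a vertex set `X`. -/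
def openNbhdSet (G : SimpleGraph V) (X : Set V) : Set V :=
  (⋃ v ∈ X, G.neighborSet v) \ X

/-- The closed neighborhood `N[X] = N(X) ∪ X` of a vertex set `X`. -/
def closedNbhdSet (G : SimpleGraph V) (X : Set V) : Set V :=
  openNbhdSet G X ∪ X

/-- A vertex `v ∈ S` is redundant with respect to `S` if at most one connected component
of `G − S` contains neighbors of `v`. -/
def Redundant (G : SimpleGraph V) (S : Set V) (v : V) : Prop :=
  Set.Subsingleton {c : (G.induce Sᶜ).ConnectedComponent | ∃ w, w ∈ c.supp ∧ G.Adj v ↑w}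

/-- The vertex connectivity of `G[X]`: the smallest size of a set `Z ⊆ X` such that
`G[X \ Z]` has more than one connected component. -/
noncomputable def conn (G : SimpleGraph V) (X : Set V) : ℕ :=
  sInf {r | ∃ Z ⊆ X, Z.ncard = r ∧ 1 < Nat.card ((G.induce (X \ Z)).ConnectedComponent)}

/-- A family `𝒞` of pairs `(C, cut(C))` of vertex sets is an `r`-cut decomposition of `G`. -/
def IsRCutDecomp (G : SimpleGraph V) (r : ℕ) (𝒞 : Set (Set V × Set V)) : Prop :=
  ∀ p ∈ 𝒞,
    p.1.ncard ≤ r ∧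
    p.2 ⊆ openNbhdSet G p.1 ∧
    p.2.ncard ≤ conn G (p.1 ∪ p.2) ∧
    ∀ q ∈ 𝒞, p.1 ∩ q.2 = ∅ ∨ q.1 ⊆ p.1

/-- All edges of `G` lie within the vertex set `A` (we model graphs with vertex set `A ⊆ U`
as simple graphs on the ambient type `U` whose edges are confined to `A`). -/
def EdgesWithin (G : SimpleGraph U) (A : Set U) : Prop :=
  ∀ u v, G.Adj u v → u ∈ A ∧ v ∈ A

/-- `(V1, V2)` is a split of the graph `G` with vertex set `A`: a partition of `A` into two
parts of size at least two such that all vertices of `V1` having at least one neighbor in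
`V2` have the same neighborhood in `V2`. -/
def IsSplit (G : SimpleGraph U) (A V1 V2 : Set U) : Prop :=
  V1 ∪ V2 = A ∧ Disjoint V1 V2 ∧ 2 ≤ V1.ncard ∧ 2 ≤ V2.ncard ∧
    ∀ u ∈ V1, ∀ w ∈ V1, (∃ a ∈ V2, G.Adj u a) → (∃ a ∈ V2, G.Adj w a) →
      ∀ a ∈ V2, (G.Adj u a ↔ G.Adj w a)

/-- `(G1, G2)` is a simple decomposition of the graph `G` (with vertex set `A`) with respect
to the split `(V1, V2)`, with marker vertex `x ∉ A`: `Gi` has vertex set `Vi ∪ {x}`,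
`Gi[Vi] = G[Vi]`, and in `Gi` the marker `x` is adjacent exactly to the vertices of `Vi`
that have a neighbor in the other part in `G`. -/
def IsSimpleDecompWrt (G : SimpleGraph U) (A V1 V2 : Set U)
    (G1 G2 : SimpleGraph U) (x : U) : Prop :=
  x ∉ A ∧
  EdgesWithin G1 (V1 ∪ {x}) ∧ EdgesWithin G2 (V2 ∪ {x}) ∧
  (∀ u ∈ V1, ∀ v ∈ V1, (G1.Adj u v ↔ G.Adj u v)) ∧
  (∀ u ∈ V2, ∀ v ∈ V2, (G2.Adj u v ↔ G.Adj u v)) ∧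
  (∀ u, G1.Adj x u ↔ u ∈ V1 ∧ ∃ w ∈ V2, G.Adj u w) ∧
  (∀ u, G2.Adj x u ↔ u ∈ V2 ∧ ∃ w ∈ V1, G.Adj u w)

/-- `u` and `w` are twins: `N(u) \ {w} = N(w) \ {u}`. -/
def IsTwin (G : SimpleGraph V) (u w : V) : Prop :=
  G.neighborSet u \ {w} = G.neighborSet w \ {u}

/-- The twin class of a vertex `u`. -/
def TwinClass (G : SimpleGraph V) (u : V) : Set V := {w | IsTwin G u w}

/-- The type of twin classes of `G`. -/
abbrev TwinClasses (G : SimpleGraph V) : Type _ := {C : Set V // ∃ u, C = TwinClass G u}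

/-- The twin-quotient graph `G_nd`: its vertices are the twin classes of `G`, and two
distinct classes `[u]` and `[v]` are adjacent iff `{u, v}` is an edge of `G`. -/
def twinQuotient (G : SimpleGraph V) : SimpleGraph (TwinClasses G) where
  Adj C D := C ≠ D ∧ ∃ u ∈ C.1, ∃ v ∈ D.1, G.Adj u v
  symm := by
    constructor
    rintro C D ⟨hne, u, hu, v, hv, h⟩
    exact ⟨hne.symm, v, hv, u, hu, h.symm⟩
  loopless := by
    constructor
    rintro C ⟨hne, -⟩
    exact hne rfl


/-
A vi-set `X` avoiding `N[C]` leaves the connected set `N[C]` inside a single component of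
`G − X`, so `|N[C]| ≤ cc(G − X) ≤ |X| + cc(G − X) = vi(G)`.
-/

theorem connected_induce_closedNbhdSet {G : SimpleGraph V} {C : Set V}
    (hC : (G.induce C).Connected) : (G.induce (closedNbhdSet G C)).Connected := by
  obtain ⟨⟨c, hc⟩⟩ := hC.nonempty
  have hCN : C ⊆ closedNbhdSet G C := Set.subset_union_right
  refine G.induce_connected_of_patches c (hCN hc) fun {v} hv => ?_
  rcases hv with hvN | hv
  · obtain ⟨w, hw, hwv⟩ := Set.mem_iUnion₂.mp hvN.1
    have hconn : (G.induce (C ∪ {v})).Connected :=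
      G.connected_induce_union hC.preconnected Preconnected.of_subsingleton hw rfl hwv
    exact ⟨C ∪ {v}, Set.union_subset hCN (Set.singleton_subset_iff.mpr (Or.inl hvN)),
      Or.inl hc, Or.inr rfl, hconn.preconnected _ _⟩
  · exact ⟨C, hCN, hc, hv, hC.preconnected _ _⟩

theorem ncard_supp_le_cc {W : Type*} [Finite W] {H : SimpleGraph W}
    (c : H.ConnectedComponent) : c.supp.ncard ≤ cc H := by
  refine le_csSup ⟨Nat.card W, ?_⟩ ⟨c, rfl⟩
  rintro n ⟨d, rfl⟩
  exact Set.ncard_le_card _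

theorem ncard_le_ccDel_of_connected [Finite V] {G : SimpleGraph V} {X T : Set V}
    (hTX : Disjoint T X) (hT : (G.induce T).Connected) : T.ncard ≤ ccDel G X := by
  have hsub : T ⊆ Xᶜ := hTX.subset_compl_right
  obtain ⟨t₀⟩ := hT.nonempty
  let c := (G.induce Xᶜ).connectedComponentMk (Set.inclusion hsub t₀)
  have hTc : T ⊆ Subtype.val '' c.supp := fun t ht =>
    ⟨Set.inclusion hsub ⟨t, ht⟩,
      ConnectedComponent.sound ((hT.preconnected ⟨t, ht⟩ t₀).map (G.induceHomOfLE hsub).toHom),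
      rfl⟩
  calc T.ncard ≤ (Subtype.val '' c.supp).ncard := Set.ncard_le_ncard hTc
    _ = c.supp.ncard := Set.ncard_image_of_injective _ Subtype.val_injective
    _ ≤ ccDel G X := ncard_supp_le_cc c

/-- If `C ⊆ V(G)` induces a connected subgraph and `|N[C]| > vi(G)`, then
every vi-set of `G` contains at least one vertex of `N[C]`. -/
theorem stmt_1 {V : Type*} [Fintype V] (G : SimpleGraph V) (C : Set V)
    (hC : (G.induce C).Connected)
    (hbig : vi G < (closedNbhdSet G C).ncard) :
    ∀ X : Set V, IsViSet G X → (X ∩ closedNbhdSet G C).Nonempty := by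
  intro X hX
  rw [← Set.not_disjoint_iff_nonempty_inter]
  intro hdisj
  have hle : (closedNbhdSet G C).ncard ≤ ccDel G X :=
    ncard_le_ccDel_of_connected hdisj.symm (connected_induce_closedNbhdSet hC)
  rw [IsViSet] at hX
  omega

end ParamReport
end

section
/- Let G be a finite simple undirected graph and let S be a vi-set of G that contains no redundant vertex. Then S contains no simplicial vertex of G. -/
namespace ParamReport

open SimpleGraph

variable {V : Type*} {U : Type*}

theorem redundant_of_isClique_neighborSet {G : SimpleGraph V} {S : Set V} {v : V}
    (hv : G.IsClique (G.neighborSet v)) : Redundant G S v := by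
  rintro c₁ ⟨w₁, rfl, hw₁⟩ c₂ ⟨w₂, rfl, hw₂⟩
  refine ConnectedComponent.sound ?_
  by_cases hw : w₁ = w₂
  · exact hw ▸ Reachable.refl _
  · exact Adj.reachable (hv hw₁ hw₂ (Subtype.coe_ne_coe.mpr hw))

theorem stmt_3_general {V : Type*} (G : SimpleGraph V) (S : Set V)
    (hnored : ∀ v ∈ S, ¬ Redundant G S v) :
    ∀ v ∈ S, ¬ G.IsClique (G.neighborSet v) :=
  fun v hv hclique => hnored v hv (redundant_of_isClique_neighborSet hclique)

/-- If `S` is a vi-set of `G` containing no redundant vertex, then `S`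
contains no simplicial vertex of `G`. -/
theorem stmt_3 {V : Type*} [Fintype V] (G : SimpleGraph V) (S : Set V)
    (hS : IsViSet G S) (hnored : ∀ v ∈ S, ¬ Redundant G S v) :
    ∀ v ∈ S, ¬ G.IsClique (G.neighborSet v) :=
  stmt_3_general G S hnored

end ParamReport
end

section
/- Let G be a finite simple undirected graph and let S be a vi-set of G that contains no redundant vertex. Then for each pair of vertices v1, v2 ∈ V(G) with N(v1) \ S ⊆ N[v2], if v1 ∈ S then v2 ∈ S. -/
namespace ParamReport

open SimpleGraph

variable {V : Type*} {U : Type*}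

theorem reachable_induce_of_mem_insert_neighborSet {G : SimpleGraph V} {S : Set V}
    {u w : ↥Sᶜ} (h : (u : V) ∈ insert (w : V) (G.neighborSet w)) :
    (G.induce Sᶜ).Reachable u w := by
  rcases h with h | h
  · rw [Subtype.ext h]
  · exact (show (G.induce Sᶜ).Adj w u from h).reachable.symm

theorem redundant_of_forall_adj_reachable {G : SimpleGraph V} {S : Set V} {v : V} (w : ↥Sᶜ)
    (h : ∀ u : ↥Sᶜ, G.Adj v u → (G.induce Sᶜ).Reachable u w) : Redundant G S v := by
  rintro c ⟨u, rfl, hu⟩ c' ⟨u', rfl, hu'⟩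
  exact ConnectedComponent.sound ((h u hu).trans (h u' hu').symm)

theorem stmt_4_general {V : Type*} (G : SimpleGraph V) (S : Set V)
    (hnored : ∀ v ∈ S, ¬ Redundant G S v) :
    ∀ v1 v2 : V, G.neighborSet v1 \ S ⊆ insert v2 (G.neighborSet v2) →
      v1 ∈ S → v2 ∈ S := by
  intro v1 v2 hsub hv1
  by_contra hv2
  exact hnored v1 hv1 <| redundant_of_forall_adj_reachable ⟨v2, hv2⟩ fun u hu =>
    reachable_induce_of_mem_insert_neighborSet (hsub ⟨hu, u.2⟩)

/-- If `S` is a vi-set of `G` containing no redundant vertex, then for all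
vertices `v1, v2` with `N(v1) \ S ⊆ N[v2]`, if `v1 ∈ S` then `v2 ∈ S`. -/
theorem stmt_4 {V : Type*} [Fintype V] (G : SimpleGraph V) (S : Set V)
    (hS : IsViSet G S) (hnored : ∀ v ∈ S, ¬ Redundant G S v) :
    ∀ v1 v2 : V, G.neighborSet v1 \ S ⊆ insert v2 (G.neighborSet v2) →
      v1 ∈ S → v2 ∈ S :=
  stmt_4_general G S hnored

end ParamReport
end

section
/- Let G be a finite simple undirected graph, let r be a nonnegative integer, and let 𝒞 be an r-cut decomposition of G. Then there is a minimum-size modulator S for coc_r(G) such that for each pair (C, cut(C)) ∈ 𝒞 the following two conditions hold: (1) if N(C) \ S ⊆ cut(C) then C ∩ S = ∅; and (2) if N(C) \ S ⊆ cut(C) and |C| = r then cut(C) ⊆ S. -/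
namespace ParamReport

open SimpleGraph

variable {V : Type*} {U : Type*}

/-! Among the minimum modulators choose one minimising `∑ v ∈ S, depth v`, where `depth v` counts
the members `C` of `𝒞` containing `v`. Laminarity makes every vertex of `cut(C)` strictly
shallower than every vertex of `C`. So if `N(C) \ S ⊆ cut(C)` but `S` meets `C`, trading `S ∩ C`
for at most as many vertices of `cut(C) \ S` lowers the potential, and it still leaves a
modulator: either all of `cut(C) \ S` fits, which cuts `C` off, or
`|S ∩ (C ∪ cut(C))| < |cut(C)| ≤ conn(C ∪ cut(C))`, so `(C ∪ cut(C)) \ S` lies in one component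
`D` of `G − S`, and the only component that can grow lies in `(S ∩ C) ∪ D` minus as many added
vertices as were removed.
For (2), once `C ∩ S = ∅`, a vertex of `cut(C) \ S` would make `C` together with it connected in
`G − S`, a component with `r + 1` vertices. -/

open Set

section Modulators

variable {G : SimpleGraph V}

lemma mem_openNbhdSet {X : Set V} {v : V} :
    v ∈ openNbhdSet G X ↔ (∃ u ∈ X, G.Adj u v) ∧ v ∉ X := by
  simp [openNbhdSet, SimpleGraph.mem_neighborSet]

lemma openNbhdSet_union_subset (A B : Set V) :
    openNbhdSet G (A ∪ B) ⊆ openNbhdSet G A ∪ openNbhdSet G B := by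
  intro v hv
  obtain ⟨⟨u, hu, huv⟩, hvAB⟩ := mem_openNbhdSet.1 hv
  rcases hu with hu | hu
  · exact .inl (mem_openNbhdSet.2 ⟨⟨u, hu, huv⟩, fun h => hvAB (.inl h)⟩)
  · exact .inr (mem_openNbhdSet.2 ⟨⟨u, hu, huv⟩, fun h => hvAB (.inr h)⟩)

lemma subset_of_preconnected_of_disjoint_openNbhdSet {A R : Set V}
    (hA : (G.induce A).Preconnected) (hAR : (A ∩ R).Nonempty)
    (hdisj : Disjoint A (openNbhdSet G R)) : A ⊆ R := by
  obtain ⟨a, haA, haR⟩ := hAR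
  suffices ∀ y : A, (G.induce A).Reachable ⟨a, haA⟩ y → (y : V) ∈ R from
    fun x hx => this ⟨x, hx⟩ (hA _ _)
  intro y hy
  replace hy := (SimpleGraph.reachable_iff_reflTransGen _ _).1 hy
  induction hy with
  | refl => exact haR
  | @tail y z _ hyz ih =>
    by_contra hzR
    exact hdisj.notMem_of_mem_left z.2 (mem_openNbhdSet.2 ⟨⟨y, ih, hyz⟩, hzR⟩)

lemma subset_image_supp_of_preconnected {s A : Set V} (hAs : A ⊆ s)
    (hA : (G.induce A).Preconnected) {a : V} (ha : a ∈ A) :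
    A ⊆ Subtype.val '' ((G.induce s).connectedComponentMk ⟨a, hAs ha⟩).supp := by
  intro x hx
  refine ⟨⟨x, hAs hx⟩, ?_, rfl⟩
  rw [SimpleGraph.ConnectedComponent.mem_supp_iff, SimpleGraph.ConnectedComponent.eq]
  exact ((hA ⟨a, ha⟩ ⟨x, hx⟩).map (G.induceHomOfLE hAs).toHom).symm

lemma preconnected_induce_image_supp {s : Set V} (c : (G.induce s).ConnectedComponent) :
    (G.induce (Subtype.val '' c.supp)).Preconnected := by
  let f : c.toSimpleGraph →g G.induce (Subtype.val '' c.supp) :=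
    { toFun := fun x => ⟨x.1.1, mem_image_of_mem _ x.2⟩
      map_rel' := id }
  refine c.connected_toSimpleGraph.preconnected.map f ?_
  rintro ⟨_, x, hx, rfl⟩
  exact ⟨⟨x, hx⟩, rfl⟩

lemma openNbhdSet_image_supp_subset {s : Set V} (c : (G.induce s).ConnectedComponent) :
    openNbhdSet G (Subtype.val '' c.supp) ⊆ sᶜ := by
  intro v hv hvs
  obtain ⟨⟨_, ⟨u, hu, rfl⟩, huv⟩, hvc⟩ := mem_openNbhdSet.1 hv
  exact hvc ⟨⟨v, hvs⟩, c.mem_supp_of_adj_mem_supp hu (by exact huv), rfl⟩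

variable [Finite V] {r : ℕ} {S : Set V}

lemma isModulator_iff_forall_preconnected :
    IsModulator G r S ↔ ∀ A ⊆ Sᶜ, (G.induce A).Preconnected → A.ncard ≤ r := by
  constructor
  · intro hS A hAS hA
    obtain rfl | ⟨a, ha⟩ := A.eq_empty_or_nonempty
    · simp
    have hbdd : BddAbove {n | ∃ c : (G.induce Sᶜ).ConnectedComponent, n = c.supp.ncard} :=
      ((finite_range fun c : (G.induce Sᶜ).ConnectedComponent => c.supp.ncard).subset
        (by rintro _ ⟨c, rfl⟩; exact ⟨c, rfl⟩)).bddAbove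
    calc A.ncard ≤ (Subtype.val '' ((G.induce Sᶜ).connectedComponentMk ⟨a, hAS ha⟩).supp).ncard :=
          ncard_le_ncard (subset_image_supp_of_preconnected hAS hA ha)
      _ = ((G.induce Sᶜ).connectedComponentMk ⟨a, hAS ha⟩).supp.ncard :=
          ncard_image_of_injective _ Subtype.val_injective
      _ ≤ ccDel G S := le_csSup hbdd ⟨_, rfl⟩
      _ ≤ r := hS
  · intro h
    refine csSup_le' ?_
    rintro _ ⟨c, rfl⟩
    rw [← ncard_image_of_injective _ Subtype.val_injective]
    exact h _ (by rintro _ ⟨x, -, rfl⟩; exact x.2) (preconnected_induce_image_supp c)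

lemma isModulator_univ : IsModulator G r univ :=
  isModulator_iff_forall_preconnected.2 fun A hA _ => by
    rw [compl_univ, subset_empty_iff] at hA
    simp [hA]

lemma IsModulator.exists_superset_openNbhdSet_subset (hS : IsModulator G r S) {A : Set V}
    (hAS : A ⊆ Sᶜ) (hA : (G.induce A).Preconnected) :
    ∃ D, A ⊆ D ∧ D.ncard ≤ r ∧ openNbhdSet G D ⊆ S := by
  obtain rfl | ⟨a, ha⟩ := A.eq_empty_or_nonempty
  · exact ⟨∅, subset_rfl, by simp, by simp [openNbhdSet]⟩
  set c := (G.induce Sᶜ).connectedComponentMk ⟨a, hAS ha⟩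
  refine ⟨_, subset_image_supp_of_preconnected hAS hA ha,
    isModulator_iff_forall_preconnected.1 hS _ ?_ (preconnected_induce_image_supp c),
    fun v hv => not_notMem.1 (openNbhdSet_image_supp_subset c hv)⟩
  rintro _ ⟨x, -, rfl⟩
  exact x.2

/-- A connected set of `G − T` either meets `R`, and then stays inside it, or avoids `S`. -/
lemma IsModulator.of_subset_union {T R : Set V} (hS : IsModulator G r S) (hST : S ⊆ T ∪ R)
    (hR : openNbhdSet G R ⊆ T) (hRT : (R \ T).ncard ≤ r) : IsModulator G r T := by
  refine isModulator_iff_forall_preconnected.2 fun A hAT hA => ?_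
  by_cases hAR : (A ∩ R).Nonempty
  · have hAR' : A ⊆ R := subset_of_preconnected_of_disjoint_openNbhdSet hA hAR
      (disjoint_of_subset_right hR (subset_compl_iff_disjoint_right.1 hAT))
    exact (ncard_le_ncard (t := R \ T) fun x hx => ⟨hAR' hx, hAT hx⟩).trans hRT
  · refine isModulator_iff_forall_preconnected.1 hS A (fun x hx hxS => ?_) hA
    rcases hST hxS with hxT | hxR
    · exact hAT hx hxT
    · exact hAR ⟨x, hx, hxR⟩

lemma preconnected_induce_sdiff_of_ncard_lt_conn {X : Set V} (h : (S ∩ X).ncard < conn G X) :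
    (G.induce (X \ S)).Preconnected := by
  have hcard : Nat.card (G.induce (X \ (S ∩ X))).ConnectedComponent ≤ 1 := by
    by_contra! h1
    have : conn G X ≤ (S ∩ X).ncard := Nat.sInf_le ⟨S ∩ X, inter_subset_right, rfl, h1⟩
    omega
  rw [sdiff_inter_self_eq_sdiff] at hcard
  have := Finite.card_le_one_iff_subsingleton.1 hcard
  exact fun u v => SimpleGraph.ConnectedComponent.exact (Subsingleton.elim _ _)

end Modulators

section Exchange

variable [Finite V] {G : SimpleGraph V} {r : ℕ} {S C cut X : Set V}

lemma IsModulator.sdiff_union_sdiff (hS : IsModulator G r S) (hC : C.ncard ≤ r)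
    (hN : openNbhdSet G C \ S ⊆ cut) : IsModulator G r (S \ C ∪ cut \ S) := by
  refine hS.of_subset_union (R := C) (fun x hx => ?_) (fun v hv => ?_)
    ((ncard_le_ncard sdiff_subset).trans hC)
  · by_cases hxC : x ∈ C
    · exact .inr hxC
    · exact .inl (.inl ⟨hx, hxC⟩)
  · by_cases hvS : v ∈ S
    · exact .inl ⟨hvS, (mem_openNbhdSet.1 hv).2⟩
    · exact .inr ⟨hN ⟨hv, hvS⟩, hvS⟩

lemma IsModulator.sdiff_union_of_ncard_lt_conn (hS : IsModulator G r S)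
    (hN : openNbhdSet G C \ S ⊆ cut) (hconn : (S ∩ (C ∪ cut)).ncard < conn G (C ∪ cut))
    (hX : X ⊆ cut \ S) (hXcard : (C ∩ S).ncard ≤ X.ncard) : IsModulator G r (S \ C ∪ X) := by
  obtain ⟨D, hCD, hDr, hND⟩ := hS.exists_superset_openNbhdSet_subset
    (fun _ hx => hx.2) (preconnected_induce_sdiff_of_ncard_lt_conn hconn)
  have hXD : X ⊆ D := fun x hx => hCD ⟨.inr (hX hx).1, (hX hx).2⟩
  refine hS.of_subset_union (R := C ∪ D) (fun x hx => ?_) (fun v hv => ?_) ?_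
  · by_cases hxC : x ∈ C
    · exact .inr (.inl hxC)
    · exact .inl (.inl ⟨hx, hxC⟩)
  · have hvCD := (mem_openNbhdSet.1 hv).2
    by_cases hvS : v ∈ S
    · exact .inl ⟨hvS, fun hvC => hvCD (.inl hvC)⟩
    rcases openNbhdSet_union_subset C D hv with hvC | hvD
    · exact (hvCD (.inr (hCD ⟨.inr (hN ⟨hvC, hvS⟩), hvS⟩))).elim
    · exact (hvS (hND hvD)).elim
  · have hsub : (C ∪ D) \ (S \ C ∪ X) ⊆ C ∩ S ∪ D \ X := by
      rintro x ⟨hxCD, hxS'⟩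
      by_cases hxS : x ∈ S
      · exact .inl ⟨by_contra fun hxC => hxS' (.inl ⟨hxS, hxC⟩), hxS⟩
      · refine .inr ⟨?_, fun hxX => hxS' (.inr hxX)⟩
        rcases hxCD with hxC | hxD
        · exact hCD ⟨.inl hxC, hxS⟩
        · exact hxD
    have hXD' := ncard_le_ncard hXD
    calc ((C ∪ D) \ (S \ C ∪ X)).ncard ≤ (C ∩ S ∪ D \ X).ncard := ncard_le_ncard hsub
      _ ≤ (C ∩ S).ncard + (D \ X).ncard := ncard_union_le _ _
      _ = (C ∩ S).ncard + (D.ncard - X.ncard) := by rw [ncard_sdiff hXD]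
      _ ≤ r := by omega

end Exchange

section Depth

noncomputable def depth (𝒞 : Set (Set V × Set V)) (v : V) : ℕ := {q ∈ 𝒞 | v ∈ q.1}.ncard

noncomputable def depthSum (𝒞 : Set (Set V × Set V)) (S : Set V) : ℕ := ∑ᶠ v ∈ S, depth 𝒞 v

variable [Finite V] {𝒞 : Set (Set V × Set V)} {C cut : Set V}

lemma depth_pos (hp : (C, cut) ∈ 𝒞) {u : V} (hu : u ∈ C) : 0 < depth 𝒞 u :=
  (ncard_pos (toFinite _)).2 ⟨_, hp, hu⟩

lemma IsRCutDecomp.depth_lt {G : SimpleGraph V} {r : ℕ} (h𝒞 : IsRCutDecomp G r 𝒞)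
    (hp : (C, cut) ∈ 𝒞) {u v : V} (hu : u ∈ C) (hv : v ∈ cut) : depth 𝒞 v < depth 𝒞 u := by
  have hvC : v ∉ C := (mem_openNbhdSet.1 ((h𝒞 _ hp).2.1 hv)).2
  have hsub : {q ∈ 𝒞 | v ∈ q.1} ⊆ {q ∈ 𝒞 | u ∈ q.1} := by
    rintro q ⟨hq, hvq⟩
    rcases (h𝒞 q hq).2.2.2 _ hp with hdisj | hCq
    · exact (hdisj.subset ⟨hvq, hv⟩).elim
    · exact ⟨hq, hCq hu⟩
  exact ncard_lt_ncard ((ssubset_iff_of_subset hsub).2 ⟨_, ⟨hp, hu⟩, fun h => hvC h.2⟩)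

end Depth

theorem Finset.sum_lt_sum_of_card_le_of_forall_lt {ι : Type*} {s t : Finset ι} {f : ι → ℕ}
    (hcard : s.card ≤ t.card) (ht : t.Nonempty) (hpos : ∀ b ∈ t, 0 < f b)
    (hlt : ∀ a ∈ s, ∀ b ∈ t, f a < f b) : ∑ a ∈ s, f a < ∑ b ∈ t, f b := by
  obtain ⟨b₀, hb₀, hmin⟩ := t.exists_min_image f ht
  have hb₀pos := hpos b₀ hb₀
  calc ∑ a ∈ s, f a ≤ s.card * (f b₀ - 1) := by
        simpa using s.sum_le_card_nsmul f (f b₀ - 1) fun a ha => by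
          have := hlt a ha b₀ hb₀
          omega
    _ ≤ t.card * (f b₀ - 1) := Nat.mul_le_mul_right _ hcard
    _ < t.card * f b₀ := Nat.mul_lt_mul_of_pos_left (by omega) (Finset.card_pos.2 ht)
    _ ≤ ∑ b ∈ t, f b := by simpa using t.card_nsmul_le_sum f (f b₀) hmin

theorem finsum_mem_lt_finsum_mem_of_ncard_le_of_forall_lt {ι : Type*} {s t : Set ι}
    {f : ι → ℕ} (hs : s.Finite) (ht : t.Finite) (hcard : s.ncard ≤ t.ncard) (hne : t.Nonempty)
    (hpos : ∀ b ∈ t, 0 < f b) (hlt : ∀ a ∈ s, ∀ b ∈ t, f a < f b) :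
    ∑ᶠ a ∈ s, f a < ∑ᶠ b ∈ t, f b := by
  rw [finsum_mem_eq_finite_toFinset_sum _ hs, finsum_mem_eq_finite_toFinset_sum _ ht]
  refine Finset.sum_lt_sum_of_card_le_of_forall_lt ?_ (ht.toFinset_nonempty.2 hne)
    (fun b hb => hpos b (ht.mem_toFinset.1 hb))
    (fun a ha b hb => hlt a (hs.mem_toFinset.1 ha) b (ht.mem_toFinset.1 hb))
  rwa [← ncard_eq_toFinset_card _ hs, ← ncard_eq_toFinset_card _ ht]

section MinModulator

variable {G : SimpleGraph V} {r : ℕ}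

lemma IsMinModulator.of_ncard_le {S T : Set V} (hS : IsMinModulator G r S)
    (hT : IsModulator G r T) (hTS : T.ncard ≤ S.ncard) : IsMinModulator G r T :=
  ⟨hT, fun U hU => hTS.trans (hS.2 U hU)⟩

variable [Finite V]

lemma exists_isMinModulator_forall_le (G : SimpleGraph V) (r : ℕ) (f : Set V → ℕ) :
    ∃ S, IsMinModulator G r S ∧ ∀ T, IsMinModulator G r T → f S ≤ f T := by
  obtain ⟨S₀, hS₀, hS₀min⟩ :=
    exists_min_image {S | IsModulator G r S} ncard (toFinite _) ⟨univ, isModulator_univ⟩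
  exact exists_min_image {S | IsMinModulator G r S} f (toFinite _) ⟨S₀, hS₀, hS₀min⟩

variable {𝒞 : Set (Set V × Set V)} {S C cut : Set V}

theorem IsRCutDecomp.inter_eq_empty (h𝒞 : IsRCutDecomp G r 𝒞) (hp : (C, cut) ∈ 𝒞)
    (hS : IsMinModulator G r S) (hSmin : ∀ T, IsMinModulator G r T → depthSum 𝒞 S ≤ depthSum 𝒞 T)
    (hN : openNbhdSet G C \ S ⊆ cut) : C ∩ S = ∅ := by
  obtain ⟨hCr, -, hconn, -⟩ := h𝒞 _ hp
  by_contra hne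
  have hCS := nonempty_iff_ne_empty.2 hne
  have hexchange : ∀ X ⊆ cut \ S, X.ncard ≤ (C ∩ S).ncard → ¬ IsModulator G r (S \ C ∪ X) := by
    intro X hX hXcard hT
    have hdisj : Disjoint (S \ C) X := disjoint_left.2 fun x hx hxX => (hX hxX).2 hx.1
    have hsplit : depthSum 𝒞 S = depthSum 𝒞 (S \ C) + depthSum 𝒞 (C ∩ S) := by
      rw [depthSum, depthSum, depthSum, inter_comm C S,
        ← finsum_mem_union disjoint_sdiff_inter (toFinite _) (toFinite _), sdiff_union_inter]
    have hsplit' : depthSum 𝒞 (S \ C ∪ X) = depthSum 𝒞 (S \ C) + depthSum 𝒞 X :=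
      finsum_mem_union hdisj (toFinite _) (toFinite _)
    have hlt : depthSum 𝒞 X < depthSum 𝒞 (C ∩ S) :=
      finsum_mem_lt_finsum_mem_of_ncard_le_of_forall_lt (toFinite _) (toFinite _) hXcard hCS
        (fun u hu => depth_pos hp hu.1) (fun v hv u hu => h𝒞.depth_lt hp hu.1 (hX hv).1)
    have hcard : (S \ C ∪ X).ncard ≤ S.ncard := by
      rw [ncard_union_eq hdisj, ← ncard_inter_add_ncard_sdiff_eq_ncard S C, inter_comm]
      omega
    have := hSmin _ (hS.of_ncard_le hT hcard)
    omega
  rcases le_or_gt (cut \ S).ncard (C ∩ S).ncard with hle | hlt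
  · exact hexchange _ subset_rfl hle (hS.1.sdiff_union_sdiff hCr hN)
  · obtain ⟨X, hX, hXcard⟩ := exists_subset_card_eq hlt.le
    refine hexchange X hX hXcard.le (hS.1.sdiff_union_of_ncard_lt_conn hN ?_ hX hXcard.ge)
    calc (S ∩ (C ∪ cut)).ncard ≤ (C ∩ S).ncard + (cut ∩ S).ncard := by
          rw [inter_union_distrib_left, inter_comm S C, inter_comm S cut]
          exact ncard_union_le _ _
      _ < (cut ∩ S).ncard + (cut \ S).ncard := by omega
      _ = cut.ncard := ncard_inter_add_ncard_sdiff_eq_ncard _ _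
      _ ≤ conn G (C ∪ cut) := hconn

theorem IsModulator.subset_of_ncard_eq {S : Set V} (hS : IsModulator G r S)
    (hcut : cut ⊆ openNbhdSet G C) (hconn : cut.ncard ≤ conn G (C ∪ cut)) (hCS : C ∩ S = ∅)
    (hCr : C.ncard = r) : cut ⊆ S := by
  intro v hv
  by_contra hvS
  have hlt : (S ∩ (C ∪ cut)).ncard < conn G (C ∪ cut) := by
    refine lt_of_lt_of_le (lt_of_le_of_lt (ncard_le_ncard (t := cut \ {v}) ?_)
      (ncard_sdiff_singleton_lt_of_mem hv)) hconn
    rintro x ⟨hxS, hxC | hxcut⟩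
    · exact (hCS.subset ⟨hxC, hxS⟩).elim
    · exact ⟨hxcut, fun hxv => hvS (hxv ▸ hxS)⟩
  have hle := isModulator_iff_forall_preconnected.1 hS _ (fun _ hx => hx.2)
    (preconnected_induce_sdiff_of_ncard_lt_conn hlt)
  have hsub : insert v C ⊆ (C ∪ cut) \ S :=
    insert_subset ⟨.inr hv, hvS⟩ fun x hx => ⟨.inl hx, fun hxS => hCS.subset ⟨hx, hxS⟩⟩
  have := ncard_le_ncard hsub
  rw [ncard_insert_of_notMem (mem_openNbhdSet.1 (hcut hv)).2, hCr] at this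
  omega

end MinModulator

/-- For every `r`-cut decomposition `𝒞` of `G`, there is a minimum-size
modulator `S` for `coc_r(G)` such that for each pair `(C, cut(C)) ∈ 𝒞`:
(1) if `N(C) \ S ⊆ cut(C)` then `C ∩ S = ∅`; and
(2) if `N(C) \ S ⊆ cut(C)` and `|C| = r` then `cut(C) ⊆ S`. -/
theorem stmt_5 {V : Type*} [Fintype V] (G : SimpleGraph V) (r : ℕ)
    (𝒞 : Set (Set V × Set V)) (h𝒞 : IsRCutDecomp G r 𝒞) :
    ∃ S : Set V, IsMinModulator G r S ∧
      ∀ p ∈ 𝒞,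
        (openNbhdSet G p.1 \ S ⊆ p.2 → p.1 ∩ S = ∅) ∧
        (openNbhdSet G p.1 \ S ⊆ p.2 → p.1.ncard = r → p.2 ⊆ S) := by
  obtain ⟨S, hS, hSmin⟩ := exists_isMinModulator_forall_le G r (depthSum 𝒞)
  refine ⟨S, hS, fun ⟨C, cut⟩ hp => ?_⟩
  have hCS : openNbhdSet G C \ S ⊆ cut → C ∩ S = ∅ := h𝒞.inter_eq_empty hp hS hSmin
  obtain ⟨-, hcut, hconn, -⟩ := h𝒞 _ hp
  exact ⟨hCS, fun hN hCr => hS.1.subset_of_ncard_eq hcut hconn (hCS hN) hCr⟩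

end ParamReport
end

section
/- Let G be a finite simple undirected graph, let (G1, G2) be a simple decomposition of G, and let {u, v} be an edge of G that is also an edge of G1. If there is a split (W1, W2) of G1 with u ∈ W1 and v ∈ W2, then there is a split of G that is crossed by the edge {u, v}. -/
namespace ParamReport

open SimpleGraph

variable {V : Type*} {U : Type*}

/-! Splits are symmetric, so we may assume the marker `x` lies in `W2`. Replacing `x` by `V2`
then turns `(W1, W2)` into the split `(W1, (W2 \ {x}) ∪ V2)` of `G`: for a vertex of `V1`,
adjacency to `x` in `G1` records whether it has a neighbour in `V2`, and all vertices of `V1`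
that have one share the same neighbourhood in `V2`. -/

theorem union_sdiff_singleton_eq_of_union_eq {α : Type*} {s t r : Set α} {x : α}
    (h : s ∪ t = r ∪ {x}) (hs : x ∉ s) (hr : x ∉ r) : s ∪ t \ {x} = r :=
  calc s ∪ t \ {x} = (s ∪ t) \ {x} := by
        rw [Set.union_sdiff_distrib, Set.sdiff_singleton_eq_self hs]
    _ = r := by rw [h, Set.union_sdiff_right, Set.sdiff_singleton_eq_self hr]

section Split

variable {U : Type*} {G G1 G2 : SimpleGraph U} {A V1 V2 W1 W2 : Set U} {x : U}

theorem IsSplit.finite_left (h : IsSplit G A V1 V2) : V1.Finite :=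
  Set.finite_of_ncard_pos (by have := h.2.2.1; omega)

theorem IsSplit.finite_right (h : IsSplit G A V1 V2) : V2.Finite :=
  Set.finite_of_ncard_pos (by have := h.2.2.2.1; omega)

/-- The edges across a split form a complete bipartite graph, so the one-sided condition in
`IsSplit` is in fact symmetric. -/
theorem IsSplit.symm (h : IsSplit G A V1 V2) : IsSplit G A V2 V1 := by
  obtain ⟨hA, hdisj, h1, h2, hsame⟩ := h
  have hmono : ∀ a ∈ V2, ∀ b ∈ V2, (∃ q ∈ V1, G.Adj b q) →
      ∀ c ∈ V1, G.Adj a c → G.Adj b c := by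
    rintro a ha b hb ⟨q, hq, hbq⟩ c hc hac
    exact ((hsame q hq c hc ⟨b, hb, hbq.symm⟩ ⟨a, ha, hac.symm⟩ b hb).mp hbq.symm).symm
  exact ⟨by rw [Set.union_comm, hA], hdisj.symm, h2, h1,
    fun a ha b hb haN hbN c hc => ⟨hmono a ha b hb hbN c hc, hmono b hb a ha haN c hc⟩⟩

theorem IsSplit.adj_iff_of_exists_adj_iff (h : IsSplit G A V1 V2) {p q c : U}
    (hp : p ∈ V1) (hq : q ∈ V1) (hc : c ∈ V2)
    (hpq : (∃ a ∈ V2, G.Adj p a) ↔ (∃ a ∈ V2, G.Adj q a)) : G.Adj p c ↔ G.Adj q c := by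
  by_cases hpN : ∃ a ∈ V2, G.Adj p a
  · exact h.2.2.2.2 p hp q hq hpN (hpq.mp hpN) c hc
  · have hqN : ¬∃ a ∈ V2, G.Adj q a := hpq.not.mp hpN
    exact iff_of_false (fun hpc => hpN ⟨c, hc, hpc⟩) (fun hqc => hqN ⟨c, hc, hqc⟩)

theorem IsSimpleDecompWrt.marker_notMem_left (hd : IsSimpleDecompWrt G A V1 V2 G1 G2 x)
    (hA : V1 ∪ V2 = A) : x ∉ V1 :=
  fun hx => hd.1 (hA ▸ Or.inl hx)

theorem IsSimpleDecompWrt.adj_iff_of_mem_left (hd : IsSimpleDecompWrt G A V1 V2 G1 G2 x)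
    {a b : U} (ha : a ∈ V1) (hb : b ∈ V1) : G1.Adj a b ↔ G.Adj a b :=
  hd.2.2.2.1 a ha b hb

theorem IsSimpleDecompWrt.adj_marker_iff (hd : IsSimpleDecompWrt G A V1 V2 G1 G2 x)
    {a : U} (ha : a ∈ V1) : G1.Adj a x ↔ ∃ w ∈ V2, G.Adj a w := by
  rw [G1.adj_comm, hd.2.2.2.2.2.1]
  exact and_iff_right ha

theorem IsSplit.replace_marker (hs : IsSplit G A V1 V2)
    (hd : IsSimpleDecompWrt G A V1 V2 G1 G2 x) (hW : IsSplit G1 (V1 ∪ {x}) W1 W2)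
    (hx : x ∈ W2) : IsSplit G A W1 (W2 \ {x} ∪ V2) := by
  obtain ⟨hWA, hWdisj, hW1card, -, hWsame⟩ := hW
  have hV1 : W1 ∪ W2 \ {x} = V1 := union_sdiff_singleton_eq_of_union_eq hWA
    (hWdisj.notMem_of_mem_right hx) (hd.marker_notMem_left hs.1)
  have hW1V1 : W1 ⊆ V1 := hV1 ▸ Set.subset_union_left
  have hW2V1 : W2 \ {x} ⊆ V1 := hV1 ▸ Set.subset_union_right
  have hQfin : (W2 \ {x} ∪ V2).Finite := (hs.finite_left.subset hW2V1).union hs.finite_right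
  refine ⟨by rw [← Set.union_assoc, hV1, hs.1],
    Set.disjoint_union_right.mpr ⟨hWdisj.mono_right Set.sdiff_subset, hs.2.1.mono_left hW1V1⟩,
    hW1card, hs.2.2.2.1.trans (Set.ncard_le_ncard Set.subset_union_right hQfin), ?_⟩
  intro p hp q hq hpN hqN c hc
  have hG1N : ∀ r ∈ V1, (∃ a ∈ W2 \ {x} ∪ V2, G.Adj r a) → ∃ a ∈ W2, G1.Adj r a := by
    rintro r hr ⟨a, ha | ha, hra⟩
    · exact ⟨a, ha.1, (hd.adj_iff_of_mem_left hr (hW2V1 ha)).mpr hra⟩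
    · exact ⟨x, hx, (hd.adj_marker_iff hr).mpr ⟨a, ha, hra⟩⟩
  have hpq : ∀ c ∈ W2, G1.Adj p c ↔ G1.Adj q c :=
    hWsame p hp q hq (hG1N p (hW1V1 hp) hpN) (hG1N q (hW1V1 hq) hqN)
  rcases hc with hc | hc
  · rw [← hd.adj_iff_of_mem_left (hW1V1 hp) (hW2V1 hc),
      ← hd.adj_iff_of_mem_left (hW1V1 hq) (hW2V1 hc)]
    exact hpq c hc.1
  · refine hs.adj_iff_of_exists_adj_iff (hW1V1 hp) (hW1V1 hq) hc ?_
    rw [← hd.adj_marker_iff (hW1V1 hp), ← hd.adj_marker_iff (hW1V1 hq)]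
    exact hpq x hx

end Split

theorem stmt_7_general {U : Type*} (G G1 G2 : SimpleGraph U) (A : Set U)
    (hGA : EdgesWithin G A)
    (V1 V2 : Set U) (x : U)
    (hsplit : IsSplit G A V1 V2)
    (hdec : IsSimpleDecompWrt G A V1 V2 G1 G2 x)
    (u v : U) (huvG : G.Adj u v)
    (W1 W2 : Set U) (hW : IsSplit G1 (V1 ∪ {x}) W1 W2)
    (hu : u ∈ W1) (hv : v ∈ W2) :
    ∃ P Q : Set U, IsSplit G A P Q ∧ ((u ∈ P ∧ v ∈ Q) ∨ (u ∈ Q ∧ v ∈ P)) := by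
  have hux : u ≠ x := fun h => hdec.1 (h ▸ (hGA u v huvG).1)
  have hvx : v ≠ x := fun h => hdec.1 (h ▸ (hGA u v huvG).2)
  rcases (hW.1.symm ▸ Or.inr rfl : x ∈ W1 ∪ W2) with hx | hx
  · exact ⟨W2, W1 \ {x} ∪ V2, hsplit.replace_marker hdec hW.symm hx,
      Or.inr ⟨Or.inl ⟨hu, hux⟩, hv⟩⟩
  · exact ⟨W1, W2 \ {x} ∪ V2, hsplit.replace_marker hdec hW hx,
      Or.inl ⟨hu, Or.inl ⟨hv, hvx⟩⟩⟩

/-- Let `(G1, G2)` be a simple decomposition of `G` (with vertex set `A`)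
with respect to a split `(V1, V2)` and marker `x`, and let `{u, v}` be an edge of `G`
that is also an edge of `G1`. If there is a split `(W1, W2)` of `G1` with `u ∈ W1` and
`v ∈ W2`, then there is a split of `G` crossed by `{u, v}`. -/
theorem stmt_7 {U : Type*} [Fintype U] (G G1 G2 : SimpleGraph U) (A : Set U)
    (hGA : EdgesWithin G A)
    (V1 V2 : Set U) (x : U)
    (hsplit : IsSplit G A V1 V2)
    (hdec : IsSimpleDecompWrt G A V1 V2 G1 G2 x)
    (u v : U) (huvG : G.Adj u v) (huvG1 : G1.Adj u v)
    (W1 W2 : Set U) (hW : IsSplit G1 (V1 ∪ {x}) W1 W2)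
    (hu : u ∈ W1) (hv : v ∈ W2) :
    ∃ P Q : Set U, IsSplit G A P Q ∧ ((u ∈ P ∧ v ∈ Q) ∨ (u ∈ Q ∧ v ∈ P)) :=
  stmt_7_general G G1 G2 A hGA V1 V2 x hsplit hdec u v huvG W1 W2 hW hu hv

end ParamReport
end
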